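/- arXiv:1505.08105 — 2 statements merged into one kernel-verified Lean document; each statement's English description precedes it below -/
import Mathlib

section
/- Let (X,d) be a pseudometric space with values in [0,∞] and let X₁, X₂ be finite nonempty subsets of X. Then the Hausdorff distance d_H(X₁,X₂) equals the minimum, over all finite relations R ⊆ X × X whose first projection is X₁ and whose second projection is X₂, of max_{(x,y)∈R} d(x,y). -/
open ENNReal

/-- The Wasserstein (coupling) characterization of the Hausdorff distance: for
finite nonempty subsets `X₁, X₂` of a `[0,∞]`-valued pseudometric space, the
Hausdorff distance equals the minimum, over all finite relations `R` with first
projection `X₁` and second projection `X₂`, of `max_{(x,y)∈R} d x y`. -/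
theorem hausdorff_eq_min_coupling {X : Type*} [DecidableEq X] (d : X → X → ℝ≥0∞)
    (hrefl : ∀ x, d x x = 0)
    (hsymm : ∀ x y, d x y = d y x)
    (htri : ∀ x y z, d x y ≤ d x z + d z y)
    (X₁ X₂ : Finset X) (h₁ : X₁.Nonempty) (h₂ : X₂.Nonempty) :
    let dH : ℝ≥0∞ :=
      max (X₁.sup fun x₁ => X₂.inf fun x₂ => d x₁ x₂)
          (X₂.sup fun x₂ => X₁.inf fun x₁ => d x₁ x₂)
    dH = sInf {m | ∃ R : Finset (X × X),
        R.image Prod.fst = X₁ ∧ R.image Prod.snd = X₂ ∧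
        m = R.sup fun q => d q.1 q.2} ∧
      ∃ R : Finset (X × X),
        R.image Prod.fst = X₁ ∧ R.image Prod.snd = X₂ ∧
        (R.sup fun q => d q.1 q.2) = dH := by
  intro dH
  -- choice functions
  have hf : ∀ x : X, ∃ y, (x ∈ X₁ → y ∈ X₂ ∧ (X₂.inf fun x₂ => d x x₂) = d x y) := by
    intro x
    by_cases hx : x ∈ X₁
    · obtain ⟨y, hy, hyd⟩ := Finset.exists_mem_eq_inf X₂ h₂ (fun x₂ => d x x₂)
      exact ⟨y, fun _ => ⟨hy, hyd⟩⟩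
    · exact ⟨h₂.choose, fun hx' => absurd hx' hx⟩
  have hg : ∀ y : X, ∃ x, (y ∈ X₂ → x ∈ X₁ ∧ (X₁.inf fun x₁ => d x₁ y) = d x y) := by
    intro y
    by_cases hy : y ∈ X₂
    · obtain ⟨x, hx, hxd⟩ := Finset.exists_mem_eq_inf X₁ h₁ (fun x₁ => d x₁ y)
      exact ⟨x, fun _ => ⟨hx, hxd⟩⟩
    · exact ⟨h₁.choose, fun hy' => absurd hy' hy⟩
  choose f hf using hf
  choose g hg using hg
  set R : Finset (X × X) :=
    X₁.image (fun x => (x, f x)) ∪ X₂.image (fun y => (g y, y)) with hR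
  have hfst : R.image Prod.fst = X₁ := by
    apply Finset.Subset.antisymm
    · intro a ha
      simp only [hR, Finset.mem_image, Finset.mem_union] at ha
      obtain ⟨q, hq, rfl⟩ := ha
      rcases hq with ⟨x, hx, rfl⟩ | ⟨y, hy, rfl⟩
      · exact hx
      · exact (hg y hy).1
    · intro x hx
      refine Finset.mem_image.mpr ⟨(x, f x), ?_, rfl⟩
      exact Finset.mem_union_left _ (Finset.mem_image_of_mem _ hx)
  have hsnd : R.image Prod.snd = X₂ := by
    apply Finset.Subset.antisymm
    · intro a ha
      simp only [hR, Finset.mem_image, Finset.mem_union] at ha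
      obtain ⟨q, hq, rfl⟩ := ha
      rcases hq with ⟨x, hx, rfl⟩ | ⟨y, hy, rfl⟩
      · exact (hf x hx).1
      · exact hy
    · intro y hy
      refine Finset.mem_image.mpr ⟨(g y, y), ?_, rfl⟩
      exact Finset.mem_union_right _ (Finset.mem_image_of_mem _ hy)
  have hsup : (R.sup fun q => d q.1 q.2) ≤ dH := by
    apply Finset.sup_le
    intro q hq
    simp only [hR, Finset.mem_union, Finset.mem_image] at hq
    rcases hq with ⟨x, hx, rfl⟩ | ⟨y, hy, rfl⟩
    · calc d x (f x) = X₂.inf fun x₂ => d x x₂ := ((hf x hx).2).symm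
        _ ≤ X₁.sup fun x₁ => X₂.inf fun x₂ => d x₁ x₂ := Finset.le_sup (f := fun x₁ => X₂.inf fun x₂ => d x₁ x₂) hx
        _ ≤ dH := le_max_left _ _
    · calc d (g y) y = X₁.inf fun x₁ => d x₁ y := ((hg y hy).2).symm
        _ ≤ X₂.sup fun x₂ => X₁.inf fun x₁ => d x₁ x₂ := Finset.le_sup (f := fun x₂ => X₁.inf fun x₁ => d x₁ x₂) hy
        _ ≤ dH := le_max_right _ _
  -- lower bound: any coupling has sup ≥ dH
  have hlow : ∀ S : Finset (X × X), S.image Prod.fst = X₁ → S.image Prod.snd = X₂ →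
      dH ≤ S.sup fun q => d q.1 q.2 := by
    intro S hS1 hS2
    apply max_le
    · apply Finset.sup_le
      intro x hx
      rw [← hS1] at hx
      obtain ⟨q, hq, rfl⟩ := Finset.mem_image.mp hx
      calc (X₂.inf fun x₂ => d q.1 x₂) ≤ d q.1 q.2 := by
            apply Finset.inf_le
            rw [← hS2]; exact Finset.mem_image.mpr ⟨q, hq, rfl⟩
        _ ≤ _ := Finset.le_sup (f := fun q : X × X => d q.1 q.2) hq
    · apply Finset.sup_le
      intro y hy
      rw [← hS2] at hy
      obtain ⟨q, hq, rfl⟩ := Finset.mem_image.mp hy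
      calc (X₁.inf fun x₁ => d x₁ q.2) ≤ d q.1 q.2 := by
            apply Finset.inf_le
            rw [← hS1]; exact Finset.mem_image.mpr ⟨q, hq, rfl⟩
        _ ≤ _ := Finset.le_sup (f := fun q : X × X => d q.1 q.2) hq
  have heq : (R.sup fun q => d q.1 q.2) = dH :=
    le_antisymm hsup (hlow R hfst hsnd)
  refine ⟨le_antisymm ?_ ?_, R, hfst, hsnd, heq⟩
  · apply le_sInf
    rintro m ⟨S, hS1, hS2, rfl⟩
    exact hlow S hS1 hS2
  · exact sInf_le ⟨R, hfst, hsnd, heq.symm⟩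
end

section
/- Let (X,d) be a pseudometric space with values in [0,∞] and X₁, X₂ finite nonempty subsets of X. Then d_H(X₁,X₂) = sup{ |max f[X₁] − max f[X₂]| : f : X → [0,∞] nonexpansive }, where f[S] denotes the image of S under f and the supremum is attained. -/
open ENNReal

private lemma kr_upper {X : Type*} (d : X → X → ℝ≥0∞)
    (htri : ∀ x y z, d x y ≤ d x z + d z y)
    (X₁ X₂ : Finset X) (h₂ : X₂.Nonempty) (f : X → ℝ≥0∞)
    (hf : ∀ x y, max (f x - f y) (f y - f x) ≤ d x y) :
    X₁.sup f - X₂.sup f ≤ X₁.sup fun x₁ => X₂.inf fun x₂ => d x₁ x₂ := by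
  rw [tsub_le_iff_right]
  apply Finset.sup_le
  intro x₁ hx₁
  obtain ⟨x₂, hx₂, hmin⟩ := Finset.exists_mem_eq_inf X₂ h₂ (fun x₂ => d x₁ x₂)
  have h1 : f x₁ - f x₂ ≤ d x₁ x₂ := le_trans (le_max_left _ _) (hf x₁ x₂)
  have h2 : f x₁ ≤ d x₁ x₂ + f x₂ := by
    rw [← tsub_le_iff_right] at *
    exact h1
  calc f x₁ ≤ d x₁ x₂ + f x₂ := h2
    _ ≤ (X₁.sup fun x₁ => X₂.inf fun x₂ => d x₁ x₂) + X₂.sup f := by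
        apply add_le_add
        · rw [← hmin]; exact Finset.le_sup (f := fun x₁ => X₂.inf fun x₂ => d x₁ x₂) hx₁
        · exact Finset.le_sup hx₂

private lemma kr_witness {X : Type*} (d : X → X → ℝ≥0∞)
    (hrefl : ∀ x, d x x = 0)
    (hsymm : ∀ x y, d x y = d y x)
    (htri : ∀ x y z, d x y ≤ d x z + d z y)
    (X₁ X₂ : Finset X) (h₂ : X₂.Nonempty) :
    ∃ f : X → ℝ≥0∞,
      (∀ x y, max (f x - f y) (f y - f x) ≤ d x y) ∧
      X₁.sup f = (X₁.sup fun x₁ => X₂.inf fun x₂ => d x₁ x₂) ∧ X₂.sup f = 0 := by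
  refine ⟨fun x => X₂.inf fun x₂ => d x x₂, ?_, rfl, ?_⟩
  · intro x y
    have key : ∀ x y : X, (X₂.inf fun x₂ => d x x₂) - (X₂.inf fun x₂ => d y x₂) ≤ d x y := by
      intro x y
      rw [tsub_le_iff_right]
      obtain ⟨z, hz, hmin⟩ := Finset.exists_mem_eq_inf X₂ h₂ (fun x₂ => d y x₂)
      calc (X₂.inf fun x₂ => d x x₂) ≤ d x z := Finset.inf_le hz
        _ ≤ d x y + d y z := htri x z y
        _ = d x y + X₂.inf fun x₂ => d y x₂ := by rw [← hmin]
    exact max_le (key x y) (le_trans (key y x) (le_of_eq (hsymm y x)))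
  · apply le_antisymm _ zero_le
    apply Finset.sup_le
    intro x hx
    calc (X₂.inf fun x₂ => d x x₂) ≤ d x x := Finset.inf_le hx
      _ = 0 := hrefl x

/-- Kantorovich–Rubinstein duality for the finite powerset functor with evaluation
`max`: the Hausdorff distance between finite nonempty subsets `X₁, X₂` equals the
supremum over nonexpansive `f : X → [0,∞]` of the extended euclidean distance
between `max f[X₁]` and `max f[X₂]`, and the supremum is attained. -/
theorem hausdorff_kantorovich_duality {X : Type*} (d : X → X → ℝ≥0∞)
    (hrefl : ∀ x, d x x = 0)
    (hsymm : ∀ x y, d x y = d y x)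
    (htri : ∀ x y z, d x y ≤ d x z + d z y)
    (X₁ X₂ : Finset X) (h₁ : X₁.Nonempty) (h₂ : X₂.Nonempty) :
    let dH : ℝ≥0∞ :=
      max (X₁.sup fun x₁ => X₂.inf fun x₂ => d x₁ x₂)
          (X₂.sup fun x₂ => X₁.inf fun x₁ => d x₁ x₂)
    dH = sSup {v | ∃ f : X → ℝ≥0∞,
        (∀ x y, max (f x - f y) (f y - f x) ≤ d x y) ∧
        v = max (X₁.sup f - X₂.sup f) (X₂.sup f - X₁.sup f)} ∧
      ∃ f : X → ℝ≥0∞,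
        (∀ x y, max (f x - f y) (f y - f x) ≤ d x y) ∧
        max (X₁.sup f - X₂.sup f) (X₂.sup f - X₁.sup f) = dH := by
  intro dH
  -- rewrite second component using symmetry
  have hswap : (X₂.sup fun x₂ => X₁.inf fun x₁ => d x₁ x₂)
      = X₂.sup fun x₂ => X₁.inf fun x₁ => d x₂ x₁ := by
    congr 1; funext x₂; congr 1; funext x₁; exact (hsymm x₂ x₁).symm
  -- the attained witness
  have hattain : ∃ f : X → ℝ≥0∞,
      (∀ x y, max (f x - f y) (f y - f x) ≤ d x y) ∧
      max (X₁.sup f - X₂.sup f) (X₂.sup f - X₁.sup f) = dH := by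
    rcases le_total (X₂.sup fun x₂ => X₁.inf fun x₁ => d x₁ x₂)
        (X₁.sup fun x₁ => X₂.inf fun x₂ => d x₁ x₂) with hle | hle
    · obtain ⟨f, hf, hs1, hs2⟩ := kr_witness d hrefl hsymm htri X₁ X₂ h₂
      refine ⟨f, hf, ?_⟩
      rw [hs1, hs2, tsub_zero, zero_tsub]
      show max _ 0 = dH
      rw [max_eq_left zero_le]
      exact (max_eq_left hle).symm
    · obtain ⟨f, hf, hs1, hs2⟩ := kr_witness d hrefl hsymm htri X₂ X₁ h₁
      refine ⟨f, hf, ?_⟩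
      rw [hs1, hs2, tsub_zero, zero_tsub]
      show max 0 _ = dH
      rw [max_eq_right zero_le, ← hswap]
      exact (max_eq_right hle).symm
  obtain ⟨f₀, hf₀, hval₀⟩ := hattain
  constructor
  · apply le_antisymm
    · -- dH ≤ sSup via membership of the witness value
      apply le_sSup
      exact ⟨f₀, hf₀, hval₀.symm⟩
    · apply sSup_le
      rintro v ⟨f, hf, rfl⟩
      apply max_le
      · exact le_trans (kr_upper d htri X₁ X₂ h₂ f hf) (le_max_left _ _)
      · refine le_trans ?_ (le_max_right _ _ : _ ≤ dH)
        have := kr_upper d htri X₂ X₁ h₁ f hf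
        rw [hswap]
        exact this
  · exact ⟨f₀, hf₀, hval₀⟩
end
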